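/- arXiv:2011.02349 — 3 statements merged into one kernel-verified Lean document; each statement's English description precedes it below -/
import Mathlib

section
/- Let Ω be a nonempty finite set equipped with the uniform probability measure P and expectation E. Let T : Ω → [0,∞], G : Ω → ℝ with finite range, ξ ∈ [0,1], and let S ⊂ (0,∞) be a finite set of infectious ages. For each τ ∈ S let n^τ, n^{0,τ} : Ω → ℝ≥0, and set N := Σ_{τ∈S} n^τ. Assume for every τ ∈ S: (i) for every g with P(G = g) > 0 and every ρ with P(T = ρ, G = g) > 0, E(n^τ | T = ρ, G = g) = (1 − ξ·1_{ρ ≤ τ})·E(n^{0,τ} | T = ρ, G = g); and (ii) n^{0,τ} and T are conditionally independent given G. Then E(N) = Σ_g P(G = g) · Σ_{τ∈S} (1 − ξ·P(T ≤ τ | G = g))·E(n^{0,τ} | G = g), the outer sum running over g with P(G = g) > 0. -/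
open Finset
open scoped Classical ENNReal NNReal

noncomputable section

variable {Ω : Type*} [Fintype Ω]

/-- Number of elements of `Ω` satisfying `E`, as a real number. -/
def cnt (E : Ω → Prop) : ℝ := ((Finset.univ.filter E).card : ℝ)

/-- The uniform (counting) probability of the event `E`. -/
def pr (E : Ω → Prop) : ℝ := cnt E / (Fintype.card Ω : ℝ)

/-- The conditional probability of the event `E` given the event `C`
(junk value `0` if `C` is empty). -/
def prC (C E : Ω → Prop) : ℝ := cnt (fun ω => C ω ∧ E ω) / cnt C

/-- The expectation of `X` under the uniform probability measure. -/
def expec (X : Ω → ℝ) : ℝ := (∑ ω, X ω) / (Fintype.card Ω : ℝ)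

/-- The conditional expectation of `X` given the event `C`, i.e. the average of `X`
over `C` (junk value `0` if `C` is empty). -/
def expecC (C : Ω → Prop) (X : Ω → ℝ) : ℝ :=
  (∑ ω ∈ Finset.univ.filter C, X ω) / cnt C

end

/-!
Fix a value `g` of `G` and an age `τ`. Splitting the event `G = g` along the values `ρ` of `T`,
`E(n^τ | G = g)` is the `P(T = ρ | G = g)`-weighted mean of
`E(n^τ | T = ρ, G = g) = (1 - ξ 1_{ρ ≤ τ}) E(n^{0,τ} | T = ρ, G = g)`. Conditional independence
turns the last factor into `E(n^{0,τ} | G = g)`, and averaging `1 - ξ 1_{ρ ≤ τ}` with these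
weights gives `1 - ξ P(T ≤ τ | G = g)`. The law of total expectation over `G` and linearity in `τ` finish.
-/

section

variable {Ω : Type*} [Fintype Ω]

lemma cnt_congr {p q : Ω → Prop} (h : ∀ ω, p ω ↔ q ω) : cnt p = cnt q :=
  congrArg cnt (funext fun ω => propext (h ω))

lemma cnt_eq_zero_iff {E : Ω → Prop} : cnt E = 0 ↔ ¬∃ ω, E ω := by
  simp [cnt, Finset.filter_eq_empty_iff]

lemma cnt_pos_iff {E : Ω → Prop} : 0 < cnt E ↔ ∃ ω, E ω := by
  simp [cnt, Finset.card_pos, Finset.filter_nonempty_iff]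

lemma pr_pos_iff {E : Ω → Prop} : 0 < pr E ↔ ∃ ω, E ω := by
  refine ⟨fun h => cnt_pos_iff.1 (pos_of_mul_pos_left h (by positivity)), fun h => ?_⟩
  obtain ⟨ω, hω⟩ := h
  have hcard : (0 : ℝ) < Fintype.card Ω := by exact_mod_cast Fintype.card_pos_iff.2 ⟨ω⟩
  exact div_pos (cnt_pos_iff.2 ⟨ω, hω⟩) hcard

lemma cnt_eq_card (E : Ω → Prop) [DecidablePred E] : cnt E = #(univ.filter E) := by
  obtain rfl : ‹DecidablePred E› = fun _ => Classical.propDecidable _ := Subsingleton.elim _ _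
  rfl

lemma sum_filter_eq_cnt_mul_expecC (C : Ω → Prop) [DecidablePred C] (Z : Ω → ℝ) :
    ∑ ω ∈ univ.filter C, Z ω = cnt C * expecC C Z := by
  obtain rfl : ‹DecidablePred C› = fun _ => Classical.propDecidable _ := Subsingleton.elim _ _
  rcases (univ.filter C).eq_empty_or_nonempty with h | h
  · simp [h, expecC]
  · have : cnt C ≠ 0 := by
      unfold cnt; exact_mod_cast h.card_pos.ne'
    rw [expecC, mul_div_cancel₀ _ this]

lemma sum_filter_eq_sum_image_sum_filter {β : Type*} (C : Ω → Prop) (Y : Ω → β)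
    (Z : Ω → ℝ) :
    ∑ ω ∈ univ.filter C, Z ω =
      ∑ b ∈ univ.image Y, ∑ ω ∈ univ.filter (fun ω => Y ω = b ∧ C ω), Z ω := by
  rw [← Finset.sum_fiberwise_of_maps_to (g := Y) (t := univ.image Y)
    (fun ω _ => Finset.mem_image_of_mem Y (Finset.mem_univ ω))]
  refine Finset.sum_congr rfl fun b _ => ?_
  rw [Finset.filter_filter]
  exact Finset.sum_congr (Finset.filter_congr fun ω _ => and_comm) fun _ _ => rfl

lemma sum_filter_eq_sum_cnt_mul_expecC {β : Type*} (C : Ω → Prop) (Y : Ω → β)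
    (Z : Ω → ℝ) :
    ∑ ω ∈ univ.filter C, Z ω =
      ∑ b ∈ univ.image Y,
        cnt (fun ω => Y ω = b ∧ C ω) * expecC (fun ω => Y ω = b ∧ C ω) Z := by
  simp only [sum_filter_eq_sum_image_sum_filter C Y, sum_filter_eq_cnt_mul_expecC]

lemma sum_filter_comp_eq_sum_cnt_mul {α : Type*} (C : Ω → Prop) (X : Ω → α) (f : α → ℝ) :
    ∑ ω ∈ univ.filter C, f (X ω) =
      ∑ a ∈ univ.image X, cnt (fun ω => X ω = a ∧ C ω) * f a := by
  rw [sum_filter_eq_sum_image_sum_filter C X]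
  refine Finset.sum_congr rfl fun a _ => ?_
  rw [Finset.sum_congr rfl fun ω hω => by rw [(Finset.mem_filter.1 hω).2.1],
    Finset.sum_const, nsmul_eq_mul, cnt_eq_card]

lemma expec_eq_sum_pr_mul_expecC {β : Type*} (G : Ω → β) (Z : Ω → ℝ) :
    expec Z = ∑ g ∈ univ.image G, pr (fun ω => G ω = g) * expecC (fun ω => G ω = g) Z := by
  rw [expec, ← Finset.sum_fiberwise_of_maps_to (g := G) (t := univ.image G)
    (fun ω _ => Finset.mem_image_of_mem G (Finset.mem_univ ω)), Finset.sum_div]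
  refine Finset.sum_congr rfl fun g _ => ?_
  rw [sum_filter_eq_cnt_mul_expecC, pr]
  ring

lemma expecC_sum {ι : Type*} (C : Ω → Prop) (s : Finset ι) (Z : ι → Ω → ℝ) :
    expecC C (fun ω => ∑ i ∈ s, Z i ω) = ∑ i ∈ s, expecC C (Z i) := by
  simp only [expecC, Finset.sum_comm (s := univ.filter C), Finset.sum_div]

lemma expecC_and_eq_of_condIndep {α β : Type*} (C : Ω → Prop) (X : Ω → α) (f : α → ℝ)
    (Y : Ω → β) (b : β)
    (hci : ∀ a, prC C (fun ω => X ω = a ∧ Y ω = b) =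
      prC C (fun ω => X ω = a) * prC C (fun ω => Y ω = b))
    (hB : ∃ ω, Y ω = b ∧ C ω) :
    expecC (fun ω => Y ω = b ∧ C ω) (fun ω => f (X ω)) = expecC C (fun ω => f (X ω)) := by
  obtain ⟨ω₀, hω₀⟩ := hB
  have hBne : cnt (fun ω => Y ω = b ∧ C ω) ≠ 0 := (cnt_pos_iff.2 ⟨ω₀, hω₀⟩).ne'
  have hCne : cnt C ≠ 0 := (cnt_pos_iff.2 ⟨ω₀, hω₀.2⟩).ne'
  have hjoint : ∀ a, cnt (fun ω => X ω = a ∧ Y ω = b ∧ C ω) =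
      cnt (fun ω => X ω = a ∧ C ω) * cnt (fun ω => Y ω = b ∧ C ω) / cnt C := by
    intro a
    have h := hci a
    rw [prC, prC, prC,
      cnt_congr (p := fun ω => C ω ∧ X ω = a ∧ Y ω = b)
        (q := fun ω => X ω = a ∧ Y ω = b ∧ C ω) (by tauto),
      cnt_congr (p := fun ω => C ω ∧ X ω = a) (q := fun ω => X ω = a ∧ C ω) (by tauto),
      cnt_congr (p := fun ω => C ω ∧ Y ω = b) (q := fun ω => Y ω = b ∧ C ω) (by tauto)] at h
    field_simp at h ⊢
    linear_combination h
  simp only [expecC, sum_filter_comp_eq_sum_cnt_mul, hjoint]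
  rw [div_eq_div_iff hBne hCne, Finset.sum_mul, Finset.sum_mul]
  refine Finset.sum_congr rfl fun a _ => ?_
  field_simp

lemma expecC_eq_of_suppression {β : Type*} [LE β] [DecidableLE β] (C : Ω → Prop)
    (T : Ω → β) (τ : β) (ξ : ℝ) (Z Z₀ : Ω → ℝ)
    (hsup : ∀ ρ, (∃ ω, T ω = ρ ∧ C ω) →
      expecC (fun ω => T ω = ρ ∧ C ω) Z =
        (1 - ξ * (if ρ ≤ τ then (1 : ℝ) else 0)) * expecC (fun ω => T ω = ρ ∧ C ω) Z₀)
    (hmean : ∀ ρ, (∃ ω, T ω = ρ ∧ C ω) →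
      expecC (fun ω => T ω = ρ ∧ C ω) Z₀ = expecC C Z₀) :
    expecC C Z = (1 - ξ * prC C (fun ω => T ω ≤ τ)) * expecC C Z₀ := by
  rcases eq_or_ne (cnt C) 0 with hC | hC
  · simp [expecC, hC]
  have hterm : ∀ ρ, cnt (fun ω => T ω = ρ ∧ C ω) * expecC (fun ω => T ω = ρ ∧ C ω) Z =
      cnt (fun ω => T ω = ρ ∧ C ω) * (1 - ξ * (if ρ ≤ τ then (1 : ℝ) else 0)) *
        expecC C Z₀ := by
    intro ρ
    by_cases hρ : ∃ ω, T ω = ρ ∧ C ω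
    · rw [hsup ρ hρ, hmean ρ hρ]
      ring
    · simp [cnt_eq_zero_iff.2 hρ]
  have hweights : ∑ ρ ∈ univ.image T,
      cnt (fun ω => T ω = ρ ∧ C ω) * (1 - ξ * (if ρ ≤ τ then (1 : ℝ) else 0)) =
        cnt C - ξ * cnt (fun ω => C ω ∧ T ω ≤ τ) := by
    rw [← sum_filter_comp_eq_sum_cnt_mul C T (fun ρ => 1 - ξ * if ρ ≤ τ then 1 else 0),
      Finset.sum_sub_distrib, ← Finset.mul_sum, Finset.sum_boole, Finset.filter_filter,
      Finset.sum_const, nsmul_one, cnt_eq_card C, cnt_eq_card (fun ω => C ω ∧ T ω ≤ τ)]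
  calc expecC C Z
      = (∑ ρ ∈ univ.image T, cnt (fun ω => T ω = ρ ∧ C ω) *
          expecC (fun ω => T ω = ρ ∧ C ω) Z) / cnt C := by
        rw [expecC, sum_filter_eq_sum_cnt_mul_expecC C T]
    _ = (cnt C - ξ * cnt (fun ω => C ω ∧ T ω ≤ τ)) * expecC C Z₀ / cnt C := by
        simp only [hterm, ← Finset.sum_mul, hweights]
    _ = (1 - ξ * prC C (fun ω => T ω ≤ τ)) * expecC C Z₀ := by
        rw [prC]
        field_simp

end

theorem statement_3_general {Ω : Type*} [Fintype Ω]
    (T : Ω → ℝ≥0∞) (G : Ω → ℝ) (ξ : ℝ)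
    (S : Finset ℝ≥0)
    (nn nn0 : ℝ≥0 → Ω → ℝ≥0)
    (hsup : ∀ τ ∈ S, ∀ g : ℝ, 0 < pr (fun ω => G ω = g) →
      ∀ ρ : ℝ≥0∞, 0 < pr (fun ω => T ω = ρ ∧ G ω = g) →
        expecC (fun ω => T ω = ρ ∧ G ω = g) (fun ω => (nn τ ω : ℝ)) =
          (1 - ξ * (if ρ ≤ (τ : ℝ≥0∞) then (1 : ℝ) else 0)) *
            expecC (fun ω => T ω = ρ ∧ G ω = g) (fun ω => (nn0 τ ω : ℝ)))
    (hci : ∀ τ ∈ S, ∀ g : ℝ, 0 < pr (fun ω => G ω = g) →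
      ∀ (y : ℝ≥0) (ρ : ℝ≥0∞),
        prC (fun ω => G ω = g) (fun ω => nn0 τ ω = y ∧ T ω = ρ) =
          prC (fun ω => G ω = g) (fun ω => nn0 τ ω = y) *
            prC (fun ω => G ω = g) (fun ω => T ω = ρ)) :
    expec (fun ω => ∑ τ ∈ S, (nn τ ω : ℝ)) =
      ∑ g ∈ Finset.univ.image G,
        pr (fun ω => G ω = g) *
          ∑ τ ∈ S,
            (1 - ξ * prC (fun ω => G ω = g) (fun ω => T ω ≤ (τ : ℝ≥0∞))) *
              expecC (fun ω => G ω = g) (fun ω => (nn0 τ ω : ℝ)) := by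
  rw [expec_eq_sum_pr_mul_expecC G]
  refine Finset.sum_congr rfl fun g hg => ?_
  obtain ⟨ω₀, -, rfl⟩ := Finset.mem_image.1 hg
  have hG : 0 < pr (fun ω => G ω = G ω₀) := pr_pos_iff.2 ⟨ω₀, rfl⟩
  rw [expecC_sum _ S fun τ ω => (nn τ ω : ℝ)]
  congr 1
  refine Finset.sum_congr rfl fun τ hτ => ?_
  exact expecC_eq_of_suppression _ T (τ : ℝ≥0∞) ξ _ _
    (fun ρ hρ => hsup τ hτ _ hG ρ (pr_pos_iff.2 hρ))
    (fun ρ hρ => expecC_and_eq_of_condIndep _ (nn0 τ) _ T ρ (hci τ hτ _ hG · ρ) hρ)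

/-- suppression formula for the reproduction number.
`S ⊂ (0,∞)` is a finite set of infectious ages; for each `τ ∈ S`, `nn τ` counts the
people infected at infectious age `τ` and `nn0 τ` the same in the absence of isolation
measures; `N = Σ_{τ∈S} nn τ`.  Under the suppression hypothesis by severity and
conditional independence of `nn0 τ` and `T` given `G` (for every `τ ∈ S`),
`E(N) = Σ_g P(G = g) · Σ_{τ∈S} (1 − ξ·P(T ≤ τ | G = g))·E(nn0 τ | G = g)`. -/
theorem statement_3 {Ω : Type*} [Fintype Ω] [Nonempty Ω]
    (T : Ω → ℝ≥0∞) (G : Ω → ℝ) (ξ : ℝ) (hξ0 : 0 ≤ ξ) (hξ1 : ξ ≤ 1)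
    (S : Finset ℝ≥0) (hS : ∀ τ ∈ S, 0 < τ)
    (nn nn0 : ℝ≥0 → Ω → ℝ≥0)
    (hsup : ∀ τ ∈ S, ∀ g : ℝ, 0 < pr (fun ω => G ω = g) →
      ∀ ρ : ℝ≥0∞, 0 < pr (fun ω => T ω = ρ ∧ G ω = g) →
        expecC (fun ω => T ω = ρ ∧ G ω = g) (fun ω => (nn τ ω : ℝ)) =
          (1 - ξ * (if ρ ≤ (τ : ℝ≥0∞) then (1 : ℝ) else 0)) *
            expecC (fun ω => T ω = ρ ∧ G ω = g) (fun ω => (nn0 τ ω : ℝ)))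
    (hci : ∀ τ ∈ S, ∀ g : ℝ, 0 < pr (fun ω => G ω = g) →
      ∀ (y : ℝ≥0) (ρ : ℝ≥0∞),
        prC (fun ω => G ω = g) (fun ω => nn0 τ ω = y ∧ T ω = ρ) =
          prC (fun ω => G ω = g) (fun ω => nn0 τ ω = y) *
            prC (fun ω => G ω = g) (fun ω => T ω = ρ)) :
    expec (fun ω => ∑ τ ∈ S, (nn τ ω : ℝ)) =
      ∑ g ∈ Finset.univ.image G,
        pr (fun ω => G ω = g) *
          ∑ τ ∈ S,
            (1 - ξ * prC (fun ω => G ω = g) (fun ω => T ω ≤ (τ : ℝ≥0∞))) *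
              expecC (fun ω => G ω = g) (fun ω => (nn0 τ ω : ℝ)) :=
  statement_3_general T G ξ S nn nn0 hsup hci
end

section
/- In the epidemic setting, let X : Ω → ℝ be any function, let t ∈ ℝ with Ω_t nonempty, and let x ∈ ℝ. Define X̌(ω) := X(σ(ω)) − τ^σ(ω) for ω ∈ Ω_{>0}. Then #Ω_t · P_t({ω ∈ Ω_t : X̌(ω) = x}) = Σ_{τ > 0} Σ_{ω' ∈ Ω_{t−τ}, X(ω') = x + τ} n^τ(ω'); equivalently, P_t(X̌_t = x) = Σ_{τ > 0} P_{t−τ}(X_{t−τ} = x + τ)·E_{P_{t−τ}}(n^τ | X = x + τ)·(#Ω_{t−τ}/#Ω_t), the sum running over the finitely many τ > 0 for which the inner sum is nonzero (terms with P_{t−τ}(X = x + τ) = 0 are understood to vanish). -/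
open Finset
open scoped Classical ENNReal NNReal

noncomputable section

variable {Ω : Type*} [Fintype Ω]

/-- `ninf tI σ τ ω` is the number of people infected by `ω` exactly at `ω`'s infectious
age `τ`: the number of `ω' ∈ Ω_{>0}` with `σ ω' = ω` and generation time `τ^σ ω' = τ`. -/
def ninf (tI : Ω → ℝ) (σ : Ω → Ω) (τ : ℝ) (ω : Ω) : ℝ :=
  cnt (fun ω' => 0 < tI ω' ∧ σ ω' = ω ∧ tI ω' - tI (σ ω') = τ)

/-- The (finitely many) positive times `τ` such that `Ω_{t-τ}` is nonempty. -/
def genTimes (tI : Ω → ℝ) (t : ℝ) : Finset ℝ :=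
  (Finset.univ.image (fun ω' => t - tI ω')).filter (fun τ => 0 < τ)

end

/-!
Every `ω ∈ Ω_t` with `t > 0` has a unique infector `σ ω`, infected at time `t - τ` where
`τ = τ^σ ω > 0`, and `X̌ ω = x` says exactly `X (σ ω) = x + τ`. Counting these `ω` first by
their generation time `τ` and then by their infector `ω'` gives `∑_τ ∑_{ω'} n^τ(ω')`. The
second identity divides by `#Ω_t` and writes each inner sum as
`P_{t-τ}(X = x + τ) · E_{P_{t-τ}}(n^τ | X = x + τ) · #Ω_{t-τ}`.
-/

section CountingIdentities

variable {Ω : Type*} [Fintype Ω]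

lemma cnt_and_eq_zero {C : Ω → Prop} (hC : cnt C = 0) (E : Ω → Prop) :
    cnt (fun ω => C ω ∧ E ω) = 0 := by
  simp only [cnt, Nat.cast_eq_zero, card_eq_zero, filter_eq_empty_iff] at hC ⊢
  exact fun ω hω hCE => hC hω hCE.1

lemma cnt_mul_prC (C E : Ω → Prop) : cnt C * prC C E = cnt (fun ω => C ω ∧ E ω) := by
  rcases eq_or_ne (cnt C) 0 with hC | hC
  · rw [hC, zero_mul, cnt_and_eq_zero hC]
  · exact mul_div_cancel₀ _ hC

/-- Both sides vanish when `C ∧ E` is empty, despite the junk values of `prC` and `expecC`. -/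
lemma prC_mul_expecC_mul_div (C E : Ω → Prop) (Y : Ω → ℝ) (N : ℝ) :
    prC C E * expecC (fun ω => C ω ∧ E ω) Y * (cnt C / N) =
      (∑ ω ∈ univ.filter (fun ω => C ω ∧ E ω), Y ω) / N := by
  unfold prC expecC
  rcases eq_or_ne (cnt fun ω => C ω ∧ E ω) 0 with hCE | hCE
  · have hempty : univ.filter (fun ω => C ω ∧ E ω) = ∅ := by
      simpa [cnt] using hCE
    simp [hempty, hCE]
  · have hC : cnt C ≠ 0 := mt (cnt_and_eq_zero · E) hCE
    rw [filter_congr_decidable]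
    field_simp

end CountingIdentities

section Epidemic

variable {Ω : Type*} [Fintype Ω] (tI : Ω → ℝ) (σ : Ω → Ω)

lemma sub_mem_genTimes {t : ℝ} {ω : Ω} (h : tI ω < t) : t - tI ω ∈ genTimes tI t := by
  simp only [genTimes, mem_filter, mem_image, mem_univ, true_and, sub_pos]
  exact ⟨⟨ω, rfl⟩, h⟩

lemma card_generation_fiber_eq_sum_ninf (X : Ω → ℝ) (t x τ : ℝ) :
    (#{ω | (tI ω = t ∧ 0 < tI ω ∧ X (σ ω) - (tI ω - tI (σ ω)) = x) ∧
        tI ω - tI (σ ω) = τ} : ℝ) =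
      ∑ ω' ∈ univ.filter (fun ω' => tI ω' = t - τ ∧ X ω' = x + τ), ninf tI σ τ ω' := by
  have infector_mem : Set.MapsTo σ
      ({ω | (tI ω = t ∧ 0 < tI ω ∧ X (σ ω) - (tI ω - tI (σ ω)) = x) ∧
        tI ω - tI (σ ω) = τ} : Finset Ω)
      ({ω' | tI ω' = t - τ ∧ X ω' = x + τ} : Finset Ω) := by
    intro ω hω
    simp only [coe_filter, mem_univ, true_and, Set.mem_ofPred_eq] at hω ⊢
    obtain ⟨⟨rfl, -, hX⟩, rfl⟩ := hω
    constructor <;> linarith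
  rw [card_eq_sum_card_fiberwise infector_mem]
  push_cast
  refine sum_congr rfl fun ω' hω' => ?_
  obtain ⟨ht, hX⟩ := (mem_filter.mp hω').2
  unfold ninf cnt
  congr 2
  ext ω
  simp only [mem_filter, mem_univ, true_and]
  constructor
  · rintro ⟨⟨⟨-, hpos, -⟩, hτ⟩, hσω⟩
    exact ⟨hpos, hσω, hτ⟩
  · rintro ⟨hpos, rfl, hτ⟩
    exact ⟨⟨⟨by linarith, hpos, by linarith⟩, hτ⟩, rfl⟩

theorem cnt_infected_eq_sum_ninf (hσ : ∀ ω, 0 < tI ω → tI (σ ω) < tI ω) (X : Ω → ℝ)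
    (t x : ℝ) :
    cnt (fun ω => tI ω = t ∧ 0 < tI ω ∧ X (σ ω) - (tI ω - tI (σ ω)) = x) =
      ∑ τ ∈ genTimes tI t,
        ∑ ω' ∈ univ.filter (fun ω' => tI ω' = t - τ ∧ X ω' = x + τ), ninf tI σ τ ω' := by
  have generation_mem : Set.MapsTo (fun ω => tI ω - tI (σ ω))
      ({ω | tI ω = t ∧ 0 < tI ω ∧ X (σ ω) - (tI ω - tI (σ ω)) = x} : Finset Ω)
      (genTimes tI t) := by
    intro ω hω
    obtain ⟨rfl, hpos, -⟩ := (mem_filter.mp hω).2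
    exact sub_mem_genTimes tI (hσ ω hpos)
  rw [cnt, filter_congr_decidable, card_eq_sum_card_fiberwise generation_mem]
  push_cast
  refine sum_congr rfl fun τ _ => ?_
  rw [filter_filter, card_generation_fiber_eq_sum_ninf]

end Epidemic

theorem statement_5_general {Ω : Type*} [Fintype Ω] (tI : Ω → ℝ) (σ : Ω → Ω)
    (hσ : ∀ ω, 0 < tI ω → tI (σ ω) < tI ω)
    (X : Ω → ℝ) (t : ℝ)
    (x : ℝ) :
    cnt (fun ω => tI ω = t) *
        prC (fun ω => tI ω = t)
          (fun ω => 0 < tI ω ∧ X (σ ω) - (tI ω - tI (σ ω)) = x) =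
      ∑ τ ∈ genTimes tI t,
        ∑ ω' ∈ Finset.univ.filter (fun ω' => tI ω' = t - τ ∧ X ω' = x + τ),
          ninf tI σ τ ω'
    ∧
    prC (fun ω => tI ω = t)
        (fun ω => 0 < tI ω ∧ X (σ ω) - (tI ω - tI (σ ω)) = x) =
      ∑ τ ∈ genTimes tI t,
        prC (fun ω => tI ω = t - τ) (fun ω => X ω = x + τ) *
          expecC (fun ω => tI ω = t - τ ∧ X ω = x + τ) (ninf tI σ τ) *
          (cnt (fun ω => tI ω = t - τ) / cnt (fun ω => tI ω = t)) := by
  have hcount := cnt_infected_eq_sum_ninf tI σ hσ X t x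
  constructor
  · rw [cnt_mul_prC, hcount]
  · simp only [prC_mul_expecC_mul_div, ← sum_div]
    rw [← hcount, prC]

/-- Epidemic setting as in Statement 4.  With
`X̌(ω) := X(σ(ω)) − τ^σ(ω)` (defined on `Ω_{>0}`, where `τ^σ(ω) = tI ω − tI (σ ω)`):
`#Ω_t · P_t(X̌_t = x) = Σ_{τ>0} Σ_{ω' ∈ Ω_{t−τ}, X ω' = x+τ} n^τ(ω')`, and equivalently
`P_t(X̌_t = x) = Σ_{τ>0} P_{t−τ}(X = x+τ)·E_{P_{t−τ}}(n^τ | X = x+τ)·(#Ω_{t−τ}/#Ω_t)`,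
the sums running over the finitely many `τ > 0` with `Ω_{t−τ}` nonempty. -/
theorem statement_5 {Ω : Type*} [Fintype Ω] (tI : Ω → ℝ) (σ : Ω → Ω)
    (hσ : ∀ ω, 0 < tI ω → tI (σ ω) < tI ω)
    (X : Ω → ℝ) (t : ℝ)
    (hne : (Finset.univ.filter (fun ω => tI ω = t)).Nonempty) (x : ℝ) :
    cnt (fun ω => tI ω = t) *
        prC (fun ω => tI ω = t)
          (fun ω => 0 < tI ω ∧ X (σ ω) - (tI ω - tI (σ ω)) = x) =
      ∑ τ ∈ genTimes tI t,
        ∑ ω' ∈ Finset.univ.filter (fun ω' => tI ω' = t - τ ∧ X ω' = x + τ),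
          ninf tI σ τ ω'
    ∧
    prC (fun ω => tI ω = t)
        (fun ω => 0 < tI ω ∧ X (σ ω) - (tI ω - tI (σ ω)) = x) =
      ∑ τ ∈ genTimes tI t,
        prC (fun ω => tI ω = t - τ) (fun ω => X ω = x + τ) *
          expecC (fun ω => tI ω = t - τ ∧ X ω = x + τ) (ninf tI σ τ) *
          (cnt (fun ω => tI ω = t - τ) / cnt (fun ω => tI ω = t)) :=
  statement_5_general tI σ hσ X t x
end

section
/- In the epidemic setting, fix t ∈ ℝ and define the set of infector–infectee pairs with infector infected at t: Ω̃_t = {(ω', ω) : ω ∈ Ω_{>0}, σ(ω) = ω', t^I(ω') = t}, with generation time τ^C(ω', ω) = t^I(ω) − t^I(ω'). Assume Ω̃_t is nonempty (so Ω_t is nonempty and R_t > 0), and let P̃_t be the uniform probability measure on Ω̃_t. Then for every τ ∈ [0,∞), P̃_t(τ^C ≤ τ) = B_t(τ)/R_t, where B_t(τ) = E_{P_t}(N^τ) and R_t = E_{P_t}(N^∞). In particular #Ω̃_t = #Ω_t · R_t. -/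
open Finset
open scoped Classical ENNReal NNReal

/-! Group the infector–infectee pairs by infector: there are `N^τ(ω')` pairs with infector `ω'`
and generation time at most `τ`, so the numbers of such pairs are `#Ω_t · B_t(τ)` and
`#Ω_t · R_t`, and the factor `#Ω_t` cancels in their ratio. -/

theorem cnt_mul_expecC {Ω : Type*} [Fintype Ω] (C : Ω → Prop) (X : Ω → ℝ) :
    cnt C * expecC C X = ∑ ω ∈ univ.filter C, X ω := by
  rcases (univ.filter C).eq_empty_or_nonempty with h | h
  · simp [cnt, h]
  · rw [expecC, mul_div_cancel₀]
    simpa [cnt] using h.card_pos.ne'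

theorem expecC_div_expecC {Ω : Type*} [Fintype Ω] (C : Ω → Prop) (X Y : Ω → ℝ) :
    expecC C X / expecC C Y = (∑ ω ∈ univ.filter C, X ω) / ∑ ω ∈ univ.filter C, Y ω := by
  rcases (univ.filter C).eq_empty_or_nonempty with h | h
  · simp [expecC, h]
  · rw [expecC, expecC, div_div_div_cancel_right₀]
    simpa [cnt] using h.card_pos.ne'

theorem card_filter_prod_eq_sum_cnt {α β : Type*} [Fintype α] [Fintype β] {P : α × β → Prop}
    [DecidablePred P] (C : α → Prop) (R : α → β → Prop) (h : ∀ a b, P (a, b) ↔ C a ∧ R a b) :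
    ((univ.filter P).card : ℝ) = ∑ a ∈ univ.filter C, cnt (R a) := by
  simp only [cnt, Finset.card_filter, Fintype.sum_prod_type, h, Finset.sum_filter, ite_and]
  push_cast
  refine Finset.sum_congr rfl fun a _ => ?_
  split_ifs <;> simp

theorem statement_7_general {Ω : Type*} [Fintype Ω] (tI : Ω → ℝ) (σ : Ω → Ω) (t : ℝ) :
    (∀ τ : ℝ, 0 ≤ τ →
      ((Finset.univ.filter (fun p : Ω × Ω =>
            (0 < tI p.2 ∧ σ p.2 = p.1 ∧ tI p.1 = t) ∧ tI p.2 - tI p.1 ≤ τ)).card : ℝ) /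
          ((Finset.univ.filter (fun p : Ω × Ω =>
            0 < tI p.2 ∧ σ p.2 = p.1 ∧ tI p.1 = t)).card : ℝ) =
        expecC (fun ω => tI ω = t)
            (fun ω => cnt (fun ω' => 0 < tI ω' ∧ σ ω' = ω ∧ tI ω' - tI ω ≤ τ)) /
          expecC (fun ω => tI ω = t)
            (fun ω => cnt (fun ω' => 0 < tI ω' ∧ σ ω' = ω)))
    ∧
    ((Finset.univ.filter (fun p : Ω × Ω =>
        0 < tI p.2 ∧ σ p.2 = p.1 ∧ tI p.1 = t)).card : ℝ) =
      cnt (fun ω => tI ω = t) *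
        expecC (fun ω => tI ω = t)
          (fun ω => cnt (fun ω' => 0 < tI ω' ∧ σ ω' = ω)) := by
  have hpairs := card_filter_prod_eq_sum_cnt (P := fun p : Ω × Ω =>
      0 < tI p.2 ∧ σ p.2 = p.1 ∧ tI p.1 = t) (fun a => tI a = t)
    (fun a b => 0 < tI b ∧ σ b = a) (fun _ _ => by tauto)
  refine ⟨fun τ _ => ?_, ?_⟩
  · rw [expecC_div_expecC, ← hpairs, ← card_filter_prod_eq_sum_cnt (P := fun p : Ω × Ω =>
      (0 < tI p.2 ∧ σ p.2 = p.1 ∧ tI p.1 = t) ∧ tI p.2 - tI p.1 ≤ τ) (fun a => tI a = t)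
      (fun a b => 0 < tI b ∧ σ b = a ∧ tI b - tI a ≤ τ) (fun _ _ => by tauto)]
  · rw [cnt_mul_expecC, hpairs]

/-- generation time distribution on infector–infectee pairs.
`Ω̃_t` is the set of infector–infectee pairs `(ω', ω)` with the infector `ω'` infected
at `t`; `τ^C(ω', ω) = tI ω − tI ω'`.  If `Ω̃_t` is nonempty then, with `P̃_t` the
uniform measure on `Ω̃_t`, for every `τ ∈ [0,∞)` one has
`P̃_t(τ^C ≤ τ) = B_t(τ)/R_t` where `B_t(τ) = E_{P_t}(N^τ)` and `R_t = E_{P_t}(N^∞)`;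
in particular `#Ω̃_t = #Ω_t · R_t`. -/
theorem statement_7 {Ω : Type*} [Fintype Ω] (tI : Ω → ℝ) (σ : Ω → Ω)
    (hσ : ∀ ω, 0 < tI ω → tI (σ ω) < tI ω) (t : ℝ)
    (hne : (Finset.univ.filter (fun p : Ω × Ω =>
        0 < tI p.2 ∧ σ p.2 = p.1 ∧ tI p.1 = t)).Nonempty) :
    (∀ τ : ℝ, 0 ≤ τ →
      ((Finset.univ.filter (fun p : Ω × Ω =>
            (0 < tI p.2 ∧ σ p.2 = p.1 ∧ tI p.1 = t) ∧ tI p.2 - tI p.1 ≤ τ)).card : ℝ) /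
          ((Finset.univ.filter (fun p : Ω × Ω =>
            0 < tI p.2 ∧ σ p.2 = p.1 ∧ tI p.1 = t)).card : ℝ) =
        expecC (fun ω => tI ω = t)
            (fun ω => cnt (fun ω' => 0 < tI ω' ∧ σ ω' = ω ∧ tI ω' - tI ω ≤ τ)) /
          expecC (fun ω => tI ω = t)
            (fun ω => cnt (fun ω' => 0 < tI ω' ∧ σ ω' = ω)))
    ∧
    ((Finset.univ.filter (fun p : Ω × Ω =>
        0 < tI p.2 ∧ σ p.2 = p.1 ∧ tI p.1 = t)).card : ℝ) =
      cnt (fun ω => tI ω = t) *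
        expecC (fun ω => tI ω = t)
          (fun ω => cnt (fun ω' => 0 < tI ω' ∧ σ ω' = ω)) :=
  statement_7_general tI σ t
end
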